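/- arXiv:1412.7556 — 3 statements merged into one kernel-verified Lean document; each statement's English description precedes it below -/
import Mathlib

section
/- Let g_n : [0,t] → ℝ^{N+1} be measurable functions with |g_n(s)| ≤ M for all n and s, converging weakly-* in L^∞ to g, and let X_n : [0,t] → ℝ^N converge uniformly to X. Let φ : ℝ^{N+1} × ℝ^N × ℝ → ℝ be continuous, nonnegative, Lipschitz, and convex in its first argument. If ∫₀^t φ(g_n(s), X_n(s), t−s) ds → 0, then ∫₀^t φ(g(s), X(s), t−s) ds = 0. -/
/-!
Along `X_n` the integrands may be replaced by `φ(g_n, X, t - ·)`, at a cost of at most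
`L t sup |X_n - X| → 0`. The differences `h_n = g_n - g` are bounded and weakly null, so the
Gram entries `∫ ⟪h_n, h_m⟫` tend to `0` as `n → ∞` for each fixed `m`. Choosing a subsequence
diagonally makes the off-diagonal entries smaller than `1/(j+1) + 1/(k+1)`, hence the Cesàro
means of the subsequence converge to `g` in `L²`, and so in `L¹` (Banach–Saks). Jensen's
inequality for the convex `φ(·, X, t - s)` and its Lipschitz bound then give
`∫ φ(g, X, t - ·) ≤ (1/K) ∑ₖ ∫ φ(g_{n_k}, X, t - ·) + L ∫ |mean_K - g|`,
and both terms tend to `0`; nonnegativity of `φ` gives the reverse inequality.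
-/

open MeasureTheory Filter Topology Finset
open scoped RealInnerProductSpace

lemma sum_range_sum_range_le_of_offDiag_le (A : ℕ → ℕ → ℝ) {C : ℝ} {ε : ℕ → ℝ}
    (hε : ∀ k, 0 ≤ ε k) (hdiag : ∀ k, A k k ≤ C) (hoff : ∀ j k, j ≠ k → A j k ≤ ε j + ε k)
    (K : ℕ) :
    ∑ j ∈ range K, ∑ k ∈ range K, A j k ≤ K * C + 2 * K * ∑ k ∈ range K, ε k := by
  calc ∑ j ∈ range K, ∑ k ∈ range K, A j k
      ≤ ∑ j ∈ range K, ∑ k ∈ range K, ((if j = k then C else 0) + (ε j + ε k)) := by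
        gcongr with j _ k _
        split_ifs with hjk
        · subst hjk; linarith [hdiag j, hε j]
        · simpa using hoff j k hjk
    _ = K * C + 2 * K * ∑ k ∈ range K, ε k := by
        simp +contextual only [sum_add_distrib, sum_ite_eq, ↓reduceIte, sum_const, card_range,
          nsmul_eq_mul, ← mul_sum]
        ring

lemma exists_strictMono_abs_le_of_tendsto_zero (G : ℕ → ℕ → ℝ) (hsymm : ∀ m n, G m n = G n m)
    (hG : ∀ m, Tendsto (fun n => G n m) atTop (𝓝 0)) :
    ∃ ns : ℕ → ℕ, StrictMono ns ∧
      ∀ j k, j ≠ k → |G (ns j) (ns k)| ≤ 1 / ((j : ℝ) + 1) + 1 / ((k : ℝ) + 1) := by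
  -- the bound on `G n m` may only depend on the earlier index `m`: `G n m → 0` at a rate
  -- depending on `m`
  obtain ⟨ns, -, hns⟩ := exists_seq_of_forall_finset_exists (fun _ => True)
    (fun m n => m < n ∧ |G n m| ≤ 1 / ((m : ℝ) + 1)) fun s _ => by
      have : ∀ᶠ n in atTop, ∀ m ∈ s, m < n ∧ |G n m| ≤ 1 / ((m : ℝ) + 1) :=
        (eventually_all_finset s).2 fun m _ => (eventually_gt_atTop m).and <|
          ((hG m).abs.eventually (ge_mem_nhds (by rw [abs_zero]; positivity)))
      simpa using this.exists
  have hmono : StrictMono ns := fun m n hmn => (hns m n hmn).1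
  have hsmall : ∀ j k, j < k → |G (ns j) (ns k)| ≤ 1 / ((j : ℝ) + 1) := fun j k hjk => by
    rw [hsymm]
    refine (hns j k hjk).2.trans ?_
    gcongr
    exact_mod_cast hmono.id_le j
  refine ⟨ns, hmono, fun j k hjk => ?_⟩
  rcases hjk.lt_or_gt with hjk | hkj
  · linarith [hsmall j k hjk, (by positivity : (0 : ℝ) ≤ 1 / ((k : ℝ) + 1))]
  · rw [hsymm]
    linarith [hsmall k j hkj, (by positivity : (0 : ℝ) ≤ 1 / ((j : ℝ) + 1))]

lemma tendsto_inv_sq_mul_cesaro_bound (C : ℝ) :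
    Tendsto (fun K : ℕ => ((K : ℝ) ^ 2)⁻¹ * (K * C + 2 * K * ∑ k ∈ range K, 1 / ((k : ℝ) + 1)))
      atTop (𝓝 0) := by
  have h : Tendsto (fun K : ℕ => (K : ℝ)⁻¹ * C + 2 * ((K : ℝ)⁻¹ * ∑ k ∈ range K, 1 / ((k : ℝ) + 1)))
      atTop (𝓝 (0 * C + 2 * 0)) :=
    ((tendsto_inv_atTop_zero.comp tendsto_natCast_atTop_atTop).mul_const C).add
      ((tendsto_one_div_add_atTop_nhds_zero_nat).cesaro.const_mul 2)
  rw [zero_mul, mul_zero, add_zero] at h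
  refine h.congr fun K => ?_
  rcases eq_or_ne (K : ℝ) 0 with hK | hK
  · simp [hK]
  · field_simp

lemma norm_sum_sq_eq_sum_sum_inner {ι E : Type*} [NormedAddCommGroup E] [InnerProductSpace ℝ E]
    (s : Finset ι) (x : ι → E) :
    ‖∑ k ∈ s, x k‖ ^ 2 = ∑ j ∈ s, ∑ k ∈ s, ⟪x j, x k⟫ := by
  rw [← real_inner_self_eq_norm_sq, sum_inner]
  simp only [inner_sum]

section

variable {α E : Type*} [MeasurableSpace α] {μ : Measure α} [NormedAddCommGroup E]

lemma integral_norm_le_mul_add_inv_mul_integral_norm_sq [IsFiniteMeasure μ] {u : α → E}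
    (hu : Integrable u μ) (hu2 : Integrable (fun a => ‖u a‖ ^ 2) μ) {η : ℝ} (hη : 0 < η) :
    ∫ a, ‖u a‖ ∂μ ≤ η * μ.real Set.univ + η⁻¹ * ∫ a, ‖u a‖ ^ 2 ∂μ := by
  have hpt : ∀ a, ‖u a‖ ≤ η + η⁻¹ * ‖u a‖ ^ 2 := fun a => by
    rw [← sub_nonneg]
    have : 0 ≤ η * (η + η⁻¹ * ‖u a‖ ^ 2 - ‖u a‖) := by
      rw [mul_sub, mul_add, ← mul_assoc, mul_inv_cancel₀ hη.ne', one_mul]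
      nlinarith [sq_nonneg (‖u a‖ - η), norm_nonneg (u a)]
    exact nonneg_of_mul_nonneg_right (by linarith) hη
  calc ∫ a, ‖u a‖ ∂μ ≤ ∫ a, (η + η⁻¹ * ‖u a‖ ^ 2) ∂μ :=
        integral_mono hu.norm ((integrable_const η).add (hu2.const_mul _)) hpt
    _ = η * μ.real Set.univ + η⁻¹ * ∫ a, ‖u a‖ ^ 2 ∂μ := by
        rw [integral_add (integrable_const η) (hu2.const_mul _), integral_const_mul,
          integral_const, smul_eq_mul, mul_comm]

lemma tendsto_integral_norm_of_tendsto_integral_norm_sq [IsFiniteMeasure μ] {u : ℕ → α → E}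
    (hu : ∀ n, Integrable (u n) μ) (hu2 : ∀ n, Integrable (fun a => ‖u n a‖ ^ 2) μ)
    (h : Tendsto (fun n => ∫ a, ‖u n a‖ ^ 2 ∂μ) atTop (𝓝 0)) :
    Tendsto (fun n => ∫ a, ‖u n a‖ ∂μ) atTop (𝓝 0) := by
  rw [Metric.tendsto_nhds]
  intro ε hε
  set m := μ.real Set.univ
  set η := ε / (2 * (m + 1))
  have hη : 0 < η := by positivity
  have hηm : η * m < ε / 2 := by
    rw [div_mul_eq_mul_div, div_lt_div_iff₀ (by positivity) two_pos]
    nlinarith [measureReal_nonneg (μ := μ) (s := Set.univ)]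
  filter_upwards [(tendsto_order.1 h).2 (η * (ε / 2)) (by positivity)] with n hn
  rw [Real.dist_0_eq_abs, abs_of_nonneg (integral_nonneg fun a => norm_nonneg _)]
  calc ∫ a, ‖u n a‖ ∂μ ≤ η * m + η⁻¹ * ∫ a, ‖u n a‖ ^ 2 ∂μ :=
        integral_norm_le_mul_add_inv_mul_integral_norm_sq (hu n) (hu2 n) hη
    _ < ε / 2 + η⁻¹ * (η * (ε / 2)) := by gcongr
    _ = ε := by field_simp; ring

end

section

variable {α E : Type*} [MeasurableSpace α] {μ : Measure α} [NormedAddCommGroup E]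
  [InnerProductSpace ℝ E]

lemma integrable_inner_of_norm_le [IsFiniteMeasure μ] {u v : α → E} {C D : ℝ}
    (hu : AEStronglyMeasurable u μ) (hv : AEStronglyMeasurable v μ)
    (hub : ∀ a, ‖u a‖ ≤ C) (hvb : ∀ a, ‖v a‖ ≤ D) :
    Integrable (fun a => ⟪u a, v a⟫) μ :=
  Integrable.of_bound (hu.inner hv) (C * D) <| ae_of_all _ fun a =>
    (norm_inner_le_norm _ _).trans
      (mul_le_mul (hub a) (hvb a) (norm_nonneg _) ((norm_nonneg _).trans (hub a)))

/-- Banach–Saks, for a bounded weakly null sequence. -/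
theorem exists_strictMono_tendsto_integral_norm_cesaro [IsFiniteMeasure μ] {h : ℕ → α → E}
    {C : ℝ} (hm : ∀ n, AEStronglyMeasurable (h n) μ) (hb : ∀ n a, ‖h n a‖ ≤ C)
    (hnull : ∀ m, Tendsto (fun n => ∫ a, ⟪h n a, h m a⟫ ∂μ) atTop (𝓝 0)) :
    ∃ ns : ℕ → ℕ, StrictMono ns ∧
      Tendsto (fun K : ℕ => ∫ a, ‖(K : ℝ)⁻¹ • ∑ k ∈ range K, h (ns k) a‖ ∂μ) atTop (𝓝 0) := by
  have hint : ∀ j k, Integrable (fun a => ⟪h j a, h k a⟫) μ := fun j k =>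
    integrable_inner_of_norm_le (hm j) (hm k) (hb j) (hb k)
  obtain ⟨ns, hns, hsmall⟩ := exists_strictMono_abs_le_of_tendsto_zero
    (fun m n => ∫ a, ⟪h m a, h n a⟫ ∂μ) (fun m n => by simp only [real_inner_comm]) hnull
  have hsq : ∀ K : ℕ, (fun a => ‖(K : ℝ)⁻¹ • ∑ k ∈ range K, h (ns k) a‖ ^ 2) =
      fun a => ((K : ℝ) ^ 2)⁻¹ * ∑ j ∈ range K, ∑ k ∈ range K, ⟪h (ns j) a, h (ns k) a⟫ :=
    fun K => funext fun a => by
      rw [norm_smul, mul_pow, norm_sum_sq_eq_sum_sum_inner, Real.norm_eq_abs, sq_abs, inv_pow]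
  have hsq_int : ∀ K : ℕ, Integrable (fun a => ‖(K : ℝ)⁻¹ • ∑ k ∈ range K, h (ns k) a‖ ^ 2) μ :=
    fun K => by
      rw [hsq]
      exact (integrable_finsetSum _ fun j _ => integrable_finsetSum _ fun k _ =>
        hint _ _).const_mul _
  have hdiag : ∀ n, ∫ a, ⟪h n a, h n a⟫ ∂μ ≤ C * C * μ.real Set.univ := fun n =>
    (Real.le_norm_self _).trans <| norm_integral_le_of_norm_le_const <| ae_of_all _ fun a =>
      (norm_inner_le_norm _ _).trans
        (mul_le_mul (hb n a) (hb n a) (norm_nonneg _) ((norm_nonneg _).trans (hb n a)))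
  refine ⟨ns, hns, tendsto_integral_norm_of_tendsto_integral_norm_sq
    (fun K => (integrable_finsetSum _ fun k _ =>
      Integrable.of_bound (hm _) C (ae_of_all _ (hb _))).smul _) hsq_int ?_⟩
  refine squeeze_zero (fun K => integral_nonneg fun a => by positivity) (fun K => ?_)
    (tendsto_inv_sq_mul_cesaro_bound (C * C * μ.real Set.univ))
  rw [hsq, integral_const_mul]
  gcongr
  simp only [integral_finsetSum _ fun j _ => integrable_finsetSum _ fun k _ => hint _ _,
    integral_finsetSum _ fun k _ => hint _ _]
  exact sum_range_sum_range_le_of_offDiag_le _ (fun k => by positivity)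
    (fun k => hdiag (ns k)) (fun j k hjk => (le_abs_self _).trans (hsmall j k hjk)) K

lemma ConvexOn.le_average_add_mul_norm {F : Type*} [NormedAddCommGroup F] [NormedSpace ℝ F]
    {f : F → ℝ} {L : NNReal} (hf : ConvexOn ℝ Set.univ f) (hL : LipschitzWith L f) (x : ℕ → F)
    (w : F) {K : ℕ} (hK : K ≠ 0) :
    f w ≤ (K : ℝ)⁻¹ * ∑ k ∈ range K, f (x k) + L * ‖(K : ℝ)⁻¹ • ∑ k ∈ range K, (x k - w)‖ := by
  set m := ∑ k ∈ range K, (K : ℝ)⁻¹ • x k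
  have hmean : (K : ℝ)⁻¹ • ∑ k ∈ range K, (x k - w) = m - w := by
    rw [sum_sub_distrib, smul_sub, smul_sum, sum_const, card_range, ← Nat.cast_smul_eq_nsmul ℝ,
      smul_smul, inv_mul_cancel₀ (Nat.cast_ne_zero.2 hK), one_smul]
  have hjensen : f m ≤ ∑ k ∈ range K, (K : ℝ)⁻¹ • f (x k) :=
    hf.map_sum_le (fun _ _ => by positivity) (by simp [hK]) fun _ _ => Set.mem_univ _
  have hclose : f w ≤ f m + L * ‖m - w‖ := by
    have := hL.dist_le_mul w m
    rw [Real.dist_eq, dist_comm, dist_eq_norm] at this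
    linarith [le_abs_self (f w - f m)]
  rw [hmean, mul_sum]
  simpa only [smul_eq_mul] using hclose.trans (add_le_add_left hjensen _)

theorem integral_le_of_tendsto_of_weak_tendsto [IsFiniteMeasure μ] {ψ : E → α → ℝ} {L : NNReal}
    (hconv : ∀ a, ConvexOn ℝ Set.univ (ψ · a)) (hlip : ∀ a, LipschitzWith L (ψ · a))
    {g : ℕ → α → E} {glim : α → E} {C : ℝ} (hgm : ∀ n, AEStronglyMeasurable (g n) μ)
    (hglimm : AEStronglyMeasurable glim μ) (hgb : ∀ n a, ‖g n a‖ ≤ C)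
    (hglimb : ∀ a, ‖glim a‖ ≤ C)
    (hweak : ∀ h : α → E, Integrable h μ →
      Tendsto (fun n => ∫ a, ⟪g n a, h a⟫ ∂μ) atTop (𝓝 (∫ a, ⟪glim a, h a⟫ ∂μ)))
    (hψg : ∀ n, Integrable (fun a => ψ (g n a) a) μ)
    (hψglim : Integrable (fun a => ψ (glim a) a) μ) {l : ℝ}
    (hlim : Tendsto (fun n => ∫ a, ψ (g n a) a ∂μ) atTop (𝓝 l)) :
    ∫ a, ψ (glim a) a ∂μ ≤ l := by
  set h : ℕ → α → E := fun n a => g n a - glim a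
  have hhm : ∀ n, AEStronglyMeasurable (h n) μ := fun n => (hgm n).sub hglimm
  have hhb : ∀ n a, ‖h n a‖ ≤ C + C := fun n a =>
    (norm_sub_le _ _).trans (add_le_add (hgb n a) (hglimb a))
  have hhi : ∀ n, Integrable (h n) μ := fun n => .of_bound (hhm n) _ (ae_of_all _ (hhb n))
  have hnull : ∀ m, Tendsto (fun n => ∫ a, ⟪h n a, h m a⟫ ∂μ) atTop (𝓝 0) := fun m => by
    have hsplit : ∀ n, ∫ a, ⟪h n a, h m a⟫ ∂μ =
        ∫ a, ⟪g n a, h m a⟫ ∂μ - ∫ a, ⟪glim a, h m a⟫ ∂μ := fun n => by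
      simp only [h, inner_sub_left]
      exact integral_sub (integrable_inner_of_norm_le (hgm n) (hhm m) (hgb n) (hhb m))
        (integrable_inner_of_norm_le hglimm (hhm m) hglimb (hhb m))
    simpa only [hsplit, sub_self] using (hweak (h m) (hhi m)).sub_const (∫ a, ⟪glim a, h m a⟫ ∂μ)
  obtain ⟨ns, hns, hL1⟩ := exists_strictMono_tendsto_integral_norm_cesaro hhm hhb hnull
  have hbound : ∀ K : ℕ, K ≠ 0 → ∫ a, ψ (glim a) a ∂μ ≤ (K : ℝ)⁻¹ * ∑ k ∈ range K,
      ∫ a, ψ (g (ns k) a) a ∂μ + L * ∫ a, ‖(K : ℝ)⁻¹ • ∑ k ∈ range K, h (ns k) a‖ ∂μ := by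
    intro K hK
    have hsum : Integrable (fun a => ∑ k ∈ range K, ψ (g (ns k) a) a) μ :=
      integrable_finsetSum _ fun k _ => hψg _
    have hmean : Integrable (fun a => ‖(K : ℝ)⁻¹ • ∑ k ∈ range K, h (ns k) a‖) μ :=
      ((integrable_finsetSum _ fun k _ => hhi _).smul _).norm
    calc ∫ a, ψ (glim a) a ∂μ
        ≤ ∫ a, ((K : ℝ)⁻¹ * ∑ k ∈ range K, ψ (g (ns k) a) a +
            L * ‖(K : ℝ)⁻¹ • ∑ k ∈ range K, h (ns k) a‖) ∂μ :=
          integral_mono hψglim ((hsum.const_mul _).add (hmean.const_mul _)) fun a =>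
            (hconv a).le_average_add_mul_norm (hlip a) (fun k => g (ns k) a) (glim a) hK
      _ = _ := by
          rw [integral_add (hsum.const_mul _) (hmean.const_mul _), integral_const_mul,
            integral_finsetSum _ fun k _ => hψg _, integral_const_mul]
  have hrhs := (hlim.comp hns.tendsto_atTop).cesaro.add (hL1.const_mul (L : ℝ))
  rw [mul_zero, add_zero] at hrhs
  exact ge_of_tendsto hrhs ((eventually_ne_atTop 0).mono hbound)

end

section

variable {α F : Type*} [MeasurableSpace α] {μ : Measure α} [IsFiniteMeasure μ] {L : NNReal}

lemma LipschitzWith.integrable_comp [NormedAddCommGroup F] {f : F → ℝ} (hf : LipschitzWith L f)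
    {Z : α → F} (hZ : Integrable Z μ) : Integrable (fun a => f (Z a)) μ :=
  ((integrable_const |f 0|).add (hZ.norm.const_mul L)).mono'
    (hf.continuous.comp_aestronglyMeasurable hZ.1) <| ae_of_all _ fun a => by
      have := hf.dist_le_mul (Z a) 0
      rw [dist_zero_right, Real.dist_eq] at this
      rw [Real.norm_eq_abs, Pi.add_apply]
      linarith [abs_sub_abs_le_abs_sub (f (Z a)) (f 0)]

lemma tendsto_integral_comp_sub_of_lipschitzWith [PseudoMetricSpace F] {f : F → ℝ}
    (hf : LipschitzWith L f) {Z W : ℕ → α → F} (hZ : ∀ n, Integrable (fun a => f (Z n a)) μ)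
    (hW : ∀ n, Integrable (fun a => f (W n a)) μ)
    (hclose : ∀ ε > 0, ∀ᶠ n in atTop, ∀ᵐ a ∂μ, dist (Z n a) (W n a) < ε) :
    Tendsto (fun n => ∫ a, f (Z n a) ∂μ - ∫ a, f (W n a) ∂μ) atTop (𝓝 0) := by
  rw [Metric.tendsto_nhds]
  intro ε hε
  set m := μ.real Set.univ
  set δ := ε / ((L + 1) * (m + 1))
  have hδ : 0 < δ := by positivity
  have hLδm : L * δ * m < ε := by
    have hm : 0 ≤ m := measureReal_nonneg
    rw [mul_div_assoc', div_mul_eq_mul_div, div_lt_iff₀ (by positivity)]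
    nlinarith [L.coe_nonneg, mul_nonneg L.coe_nonneg hm]
  filter_upwards [hclose δ hδ] with n hn
  rw [dist_zero_right, ← integral_sub (hZ n) (hW n)]
  refine (norm_integral_le_of_norm_le_const (hn.mono fun a ha => ?_)).trans_lt hLδm
  rw [Real.norm_eq_abs, ← Real.dist_eq]
  exact (hf.dist_le_mul _ _).trans (mul_le_mul_of_nonneg_left ha.le L.coe_nonneg)

end

lemma LipschitzWith.integrableOn_Icc_comp {E F : Type*} [NormedAddCommGroup E]
    [NormedAddCommGroup F] [MeasurableSpace F] [OpensMeasurableSpace F] {L : NNReal}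
    {f : E × F × ℝ → ℝ} (hf : LipschitzWith L f) {u : ℝ → E} {Y : ℝ → F} {t M : ℝ}
    (hu : AEStronglyMeasurable u (volume.restrict (Set.Icc 0 t))) (hub : ∀ s, ‖u s‖ ≤ M)
    (hY : ContinuousOn Y (Set.Icc 0 t)) :
    Integrable (fun s => f (u s, Y s, t - s)) (volume.restrict (Set.Icc 0 t)) :=
  hf.integrable_comp <| (Integrable.of_bound hu M (ae_of_all _ hub)).prodMk <|
    (hY.integrableOn_compact isCompact_Icc).prodMk
      (continuous_const.sub continuous_id).integrableOn_Icc

theorem stmt5_general (N : ℕ) (t M : ℝ) (L : NNReal)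
    (g : ℕ → ℝ → EuclideanSpace ℝ (Fin (N + 1)))
    (glim : ℝ → EuclideanSpace ℝ (Fin (N + 1)))
    (hgmeas : ∀ n, Measurable (g n)) (hglimmeas : Measurable glim)
    (hgbd : ∀ n s, ‖g n s‖ ≤ M) (hglimbd : ∀ s, ‖glim s‖ ≤ M)
    (hweak : ∀ h : ℝ → EuclideanSpace ℝ (Fin (N + 1)),
      Integrable h (volume.restrict (Set.Icc 0 t)) →
        Filter.Tendsto (fun n => ∫ s in Set.Icc (0:ℝ) t, ⟪g n s, h s⟫)
          Filter.atTop (nhds (∫ s in Set.Icc (0:ℝ) t, ⟪glim s, h s⟫)))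
    (X : ℕ → ℝ → EuclideanSpace ℝ (Fin N)) (Xlim : ℝ → EuclideanSpace ℝ (Fin N))
    (hXconv : TendstoUniformlyOn X Xlim Filter.atTop (Set.Icc 0 t))
    (hXcont : ∀ n, ContinuousOn (X n) (Set.Icc 0 t))
    (φ : EuclideanSpace ℝ (Fin (N + 1)) → EuclideanSpace ℝ (Fin N) → ℝ → ℝ)
    (hφpos : ∀ v x τ, 0 ≤ φ v x τ)
    (hφlip : LipschitzWith L (fun q : EuclideanSpace ℝ (Fin (N + 1)) ×
      EuclideanSpace ℝ (Fin N) × ℝ => φ q.1 q.2.1 q.2.2))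
    (hφconv : ∀ x τ, ConvexOn ℝ Set.univ (fun v => φ v x τ))
    (hlim : Filter.Tendsto (fun n => ∫ s in Set.Icc (0:ℝ) t, φ (g n s) (X n s) (t - s))
      Filter.atTop (nhds 0)) :
    ∫ s in Set.Icc (0:ℝ) t, φ (glim s) (Xlim s) (t - s) = 0 := by
  have hXlim : ContinuousOn Xlim (Set.Icc 0 t) :=
    hXconv.continuousOn (Eventually.of_forall hXcont).frequently
  have hshift := tendsto_integral_comp_sub_of_lipschitzWith hφlip
    (Z := fun n s => (g n s, X n s, t - s)) (W := fun n s => (g n s, Xlim s, t - s))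
    (fun n => hφlip.integrableOn_Icc_comp (hgmeas n).aestronglyMeasurable (hgbd n) (hXcont n))
    (fun n => hφlip.integrableOn_Icc_comp (hgmeas n).aestronglyMeasurable (hgbd n) hXlim)
    fun ε hε =>
      (Metric.tendstoUniformlyOn_iff.1 hXconv ε hε).mono fun n hn =>
        (ae_restrict_mem measurableSet_Icc).mono fun s hs => by
          simpa [Prod.dist_eq, dist_comm] using hn s hs
  refine le_antisymm ?_ (setIntegral_nonneg measurableSet_Icc fun s _ => hφpos _ _ _)
  exact integral_le_of_tendsto_of_weak_tendsto (ψ := fun v s => φ v (Xlim s) (t - s))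
    (fun s => hφconv _ _)
    (fun s => mul_one L ▸ hφlip.comp (LipschitzWith.prodMk_right (Xlim s, t - s)))
    (fun n => (hgmeas n).aestronglyMeasurable) hglimmeas.aestronglyMeasurable hgbd hglimbd
    hweak (fun n => hφlip.integrableOn_Icc_comp (hgmeas n).aestronglyMeasurable (hgbd n) hXlim)
    (hφlip.integrableOn_Icc_comp hglimmeas.aestronglyMeasurable hglimbd hXlim)
    (by simpa using hlim.sub hshift)

/-- If `g_n` are uniformly bounded measurable functions converging weakly-*
in `L^∞` to `g`, `X_n → X` uniformly on `[0,t]`, and `φ ≥ 0` is continuous, Lipschitz and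
convex in its first argument, then `∫ φ(g_n, X_n, t-·) → 0` implies `∫ φ(g, X, t-·) = 0`. -/
theorem stmt5 (N : ℕ) (t M : ℝ) (ht : 0 < t) (hM : 0 < M) (L : NNReal)
    (g : ℕ → ℝ → EuclideanSpace ℝ (Fin (N + 1)))
    (glim : ℝ → EuclideanSpace ℝ (Fin (N + 1)))
    (hgmeas : ∀ n, Measurable (g n)) (hglimmeas : Measurable glim)
    (hgbd : ∀ n s, ‖g n s‖ ≤ M) (hglimbd : ∀ s, ‖glim s‖ ≤ M)
    (hweak : ∀ h : ℝ → EuclideanSpace ℝ (Fin (N + 1)),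
      Integrable h (volume.restrict (Set.Icc 0 t)) →
        Filter.Tendsto (fun n => ∫ s in Set.Icc (0:ℝ) t, ⟪g n s, h s⟫)
          Filter.atTop (nhds (∫ s in Set.Icc (0:ℝ) t, ⟪glim s, h s⟫)))
    (X : ℕ → ℝ → EuclideanSpace ℝ (Fin N)) (Xlim : ℝ → EuclideanSpace ℝ (Fin N))
    (hXconv : TendstoUniformlyOn X Xlim Filter.atTop (Set.Icc 0 t))
    (hXcont : ∀ n, ContinuousOn (X n) (Set.Icc 0 t))
    (φ : EuclideanSpace ℝ (Fin (N + 1)) → EuclideanSpace ℝ (Fin N) → ℝ → ℝ)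
    (hφcont : Continuous (fun q : EuclideanSpace ℝ (Fin (N + 1)) ×
      EuclideanSpace ℝ (Fin N) × ℝ => φ q.1 q.2.1 q.2.2))
    (hφpos : ∀ v x τ, 0 ≤ φ v x τ)
    (hφlip : LipschitzWith L (fun q : EuclideanSpace ℝ (Fin (N + 1)) ×
      EuclideanSpace ℝ (Fin N) × ℝ => φ q.1 q.2.1 q.2.2))
    (hφconv : ∀ x τ, ConvexOn ℝ Set.univ (fun v => φ v x τ))
    (hlim : Filter.Tendsto (fun n => ∫ s in Set.Icc (0:ℝ) t, φ (g n s) (X n s) (t - s))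
      Filter.atTop (nhds 0)) :
    ∫ s in Set.Icc (0:ℝ) t, φ (glim s) (Xlim s) (t - s) = 0 :=
  stmt5_general N t M L g glim hgmeas hglimmeas hgbd hglimbd hweak X Xlim hXconv hXcont φ hφpos
    hφlip hφconv hlim
end

section
/- Let K ⊆ ℝ^N × ℝ be nonempty, compact, and convex, let V ⊆ ℝ^N be a linear subspace, p ∈ ℝ^N, and define χ(q) := sup_{(b,l) ∈ K} (−b·(p+q) − l). Suppose q̄ ∈ V^⊥ minimizes χ over V^⊥. Then there exists (b,l) ∈ K with b ∈ V and χ(q̄) = −b·(p+q̄) − l; consequently sup_{(b,l) ∈ K, b ∈ V} (−b·p − l) ≥ min_{q ∈ V^⊥} χ(q). -/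
open scoped RealInnerProductSpace

/-!
`χ q` is the maximum over `K` of the affine function `(b, l) ↦ -⟪b, p + q⟫ - l`; let `A` be the
(compact, convex) set of its maximizers at `q̄`. If no point of `A` had `b ∈ V`, Hahn–Banach would
separate the `b`-projection of `A` from `V` by a direction `d ∈ Vᗮ` with `⟪b, d⟫ > 0` on `A`, and
then `χ (q̄ + t d) < χ q̄` for small `t > 0` (by compactness the objective at `q̄` stays uniformly
below its maximum where `⟪b, d⟫ ≤ 0`), contradicting the minimality of `q̄` on `Vᗮ`. For `b ∈ V`
we have `⟪b, q̄⟫ = 0`, which gives the bound on the restricted supremum.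
-/

theorem IsCompact.exists_pos_add_le_of_not_isMaxOn {X : Type*} [TopologicalSpace X]
    {K S : Set X} (hK : IsCompact K) (hS : IsClosed S) {f : X → ℝ} (hf : Continuous f)
    {x₀ : X} (hx₀ : IsMaxOn f K x₀) (hKS : ∀ x ∈ K ∩ S, ¬IsMaxOn f K x) :
    ∃ δ > 0, ∀ x ∈ K ∩ S, f x + δ ≤ f x₀ := by
  rcases (K ∩ S).eq_empty_or_nonempty with hempty | hne
  · exact ⟨1, one_pos, by simp [hempty]⟩
  obtain ⟨c, hc, hcmax⟩ := (hK.inter_right hS).exists_isMaxOn hne hf.continuousOn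
  have hlt : f c < f x₀ := by
    by_contra! hle
    exact hKS c hc fun y hy => (hx₀ hy).trans hle
  exact ⟨f x₀ - f c, sub_pos.2 hlt, fun x hx => by linarith [isMaxOn_iff.1 hcmax x hx]⟩

/-- The one-sided half of Danskin's theorem: the right derivative at `0` of `t ↦ max_K (f - t g)`
is `-min g` over the maximizers of `f`. -/
theorem IsCompact.exists_isMaxOn_and_nonpos_of_le_max_sub {X : Type*} [TopologicalSpace X]
    {K : Set X} (hK : IsCompact K) {f g : X → ℝ} (hf : Continuous f) (hg : Continuous g)
    (hle : ∀ t > 0, ∃ y ∈ K, ∀ x ∈ K, f x ≤ f y - t * g y) :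
    ∃ x ∈ K, IsMaxOn f K x ∧ g x ≤ 0 := by
  obtain ⟨y, hyK, -⟩ := hle 1 one_pos
  obtain ⟨x₀, hx₀K, hx₀⟩ := hK.exists_isMaxOn ⟨y, hyK⟩ hf.continuousOn
  by_contra! hpos
  obtain ⟨δ, hδ, hgap⟩ := hK.exists_pos_add_le_of_not_isMaxOn (isClosed_le hg continuous_const)
    hf hx₀ fun x hx hmax => (hpos x hx.1 hmax).not_ge hx.2
  obtain ⟨G, hG⟩ := hK.exists_bound_of_continuousOn hg.continuousOn
  have hG0 : 0 ≤ G := (norm_nonneg _).trans (hG y hyK)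
  set t := δ / (G + 1)
  have ht : 0 < t := by positivity
  have htG : t * G < δ := by
    rw [div_mul_eq_mul_div, div_lt_iff₀ (by positivity)]
    nlinarith
  obtain ⟨y, hyK, hy⟩ := hle t ht
  have hx₀y := hy x₀ hx₀K
  rcases lt_or_ge 0 (g y) with hgy | hgy
  · linarith [isMaxOn_iff.1 hx₀ y hyK, mul_pos ht hgy]
  · have hgG : -G ≤ g y := (abs_le.1 (hG y hyK)).1
    linarith [hgap y ⟨hyK, hgy⟩, mul_le_mul_of_nonneg_left hgG ht.le]

theorem map_eq_zero_of_forall_lt_map {E F : Type*} [AddCommGroup E] [Module ℝ E]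
    [FunLike F E ℝ] [LinearMapClass F ℝ E ℝ] {V : Submodule ℝ E} (φ : F) {v : ℝ}
    (hφ : ∀ w ∈ V, v < φ w) {w : E} (hw : w ∈ V) : φ w = 0 := by
  by_contra hne
  have := hφ (((v - 1) / φ w) • w) (V.smul_mem _ hw)
  rw [map_smul, smul_eq_mul, div_mul_cancel₀ _ hne] at this
  linarith

section InnerProductSpace

variable {E : Type*} [NormedAddCommGroup E] [InnerProductSpace ℝ E]

theorem Submodule.exists_mem_orthogonal_forall_inner_pos [CompleteSpace E] {V : Submodule ℝ E}
    (hV : IsClosed (V : Set E)) {P : Set E} (hPc : IsCompact P) (hPconv : Convex ℝ P)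
    (hPV : Disjoint P V) : ∃ d ∈ Vᗮ, ∀ b ∈ P, 0 < ⟪b, d⟫ := by
  obtain ⟨φ, u, v, hφP, huv, hφV⟩ :=
    geometric_hahn_banach_compact_closed hPconv hPc V.convex hV hPV
  have hv : v < 0 := by simpa using hφV 0 V.zero_mem
  set d := -(InnerProductSpace.toDual ℝ E).symm φ
  have hinner : ∀ x, ⟪x, d⟫ = -φ x := fun x => by
    rw [inner_neg_right, real_inner_comm, InnerProductSpace.toDual_symm_apply]
  refine ⟨d, fun w hw => ?_, fun b hb => ?_⟩
  · rw [hinner, map_eq_zero_of_forall_lt_map φ hφV hw, neg_zero]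
  · linarith [hinner b, hφP b hb]

noncomputable def negPairing (c : E) : E × ℝ →L[ℝ] ℝ :=
  -((innerSL ℝ c).comp (ContinuousLinearMap.fst ℝ E ℝ)) - ContinuousLinearMap.snd ℝ E ℝ

theorem coe_negPairing (c : E) : ⇑(negPairing c) = fun x => -⟪x.1, c⟫ - x.2 := by
  ext x
  simp [negPairing, real_inner_comm]

theorem negPairing_apply (c : E) (x : E × ℝ) : negPairing c x = -⟪x.1, c⟫ - x.2 := by
  rw [coe_negPairing]

theorem negPairing_add_smul (c d : E) (t : ℝ) (x : E × ℝ) :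
    negPairing (c + t • d) x = negPairing c x - t * ⟪x.1, d⟫ := by
  simp only [negPairing_apply, inner_add_right, real_inner_smul_right]
  ring

theorem exists_isMaxOn_negPairing_fst_mem [CompleteSpace E] {K : Set (E × ℝ)}
    (hK : IsCompact K) (hKconv : Convex ℝ K) {V : Submodule ℝ E} (hV : IsClosed (V : Set E))
    {c : E} (hmin : ∀ d ∈ Vᗮ, ∃ y ∈ K, ∀ x ∈ K, negPairing c x ≤ negPairing (c + d) y) :
    ∃ x ∈ K, IsMaxOn (negPairing c) K x ∧ x.1 ∈ V := by
  obtain ⟨y, hyK, -⟩ := hmin 0 V.orthogonal.zero_mem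
  obtain ⟨x₀, hx₀K, hx₀⟩ := hK.exists_isMaxOn ⟨y, hyK⟩ (negPairing c).continuous.continuousOn
  by_contra! hnotV
  set A := {x ∈ K | negPairing c x₀ ≤ negPairing c x}
  have hA_max : ∀ x ∈ A, IsMaxOn (negPairing c) K x := fun x hx y hy => (hx₀ hy).trans hx.2
  have hA_compact : IsCompact A :=
    hK.inter_right (isClosed_le continuous_const (negPairing c).continuous)
  have hA_convex : Convex ℝ A := ((negPairing c).toLinearMap.concaveOn hKconv).convex_ge _
  obtain ⟨d, hdV, hd⟩ := V.exists_mem_orthogonal_forall_inner_pos hV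
    (hA_compact.image continuous_fst) (hA_convex.linear_image (LinearMap.fst ℝ E ℝ))
    (Set.disjoint_left.2 fun _ ⟨x, hx, hxb⟩ => hxb ▸ hnotV x hx.1 (hA_max x hx))
  obtain ⟨x, hxK, hxmax, hxd⟩ := hK.exists_isMaxOn_and_nonpos_of_le_max_sub
    (negPairing c).continuous (continuous_fst.inner continuous_const) fun t _ => by
      obtain ⟨y, hyK, hy⟩ := hmin (t • d) (V.orthogonal.smul_mem t hdV)
      exact ⟨y, hyK, fun x hx => (negPairing_add_smul c d t y) ▸ hy x hx⟩
  exact (hd x.1 ⟨x, ⟨hxK, hxmax hx₀K⟩, rfl⟩).not_ge hxd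

end InnerProductSpace

/-- If `q̄ ∈ V^⊥` minimizes `χ(q) = sup_{(b,l) ∈ K} (-b·(p+q) - l)` over
`V^⊥` (with `K` nonempty compact convex), then some `(b,l) ∈ K` with `b ∈ V` attains
`χ(q̄)`; consequently `sup_{(b,l) ∈ K, b ∈ V} (-b·p - l) ≥ χ(q̄)`. -/
theorem stmt9 (N : ℕ) (K : Set (EuclideanSpace ℝ (Fin N) × ℝ))
    (hne : K.Nonempty) (hcomp : IsCompact K) (hconv : Convex ℝ K)
    (V : Submodule ℝ (EuclideanSpace ℝ (Fin N)))
    (p : EuclideanSpace ℝ (Fin N))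
    (χ : EuclideanSpace ℝ (Fin N) → ℝ)
    (hχ : ∀ q, χ q = sSup ((fun bl : EuclideanSpace ℝ (Fin N) × ℝ =>
      -⟪bl.1, p + q⟫ - bl.2) '' K))
    (qbar : EuclideanSpace ℝ (Fin N)) (hqbar : qbar ∈ Vᗮ)
    (hmin : ∀ q ∈ Vᗮ, χ qbar ≤ χ q) :
    (∃ bl ∈ K, bl.1 ∈ V ∧ χ qbar = -⟪bl.1, p + qbar⟫ - bl.2) ∧
      χ qbar ≤ sSup {r : ℝ | ∃ bl ∈ K, bl.1 ∈ V ∧ r = -⟪bl.1, p⟫ - bl.2} := by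
  have hmax : ∀ q, ∃ y ∈ K, χ q = negPairing (p + q) y ∧ IsMaxOn (negPairing (p + q)) K y :=
    fun q => by
      rw [hχ q, ← coe_negPairing]
      exact hcomp.exists_sSup_image_eq_and_ge hne (negPairing _).continuous.continuousOn
  obtain ⟨y, hyK, hχy, hy⟩ := hmax qbar
  obtain ⟨x, hxK, hxmax, hxV⟩ := exists_isMaxOn_negPairing_fst_mem hcomp hconv
    (Submodule.closed_of_finiteDimensional V) (c := p + qbar) fun d hd => by
      obtain ⟨z, hzK, hχz, -⟩ := hmax (qbar + d)
      refine ⟨z, hzK, fun w hw => ?_⟩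
      calc negPairing (p + qbar) w ≤ negPairing (p + qbar) y := hy hw
        _ = χ qbar := hχy.symm
        _ ≤ χ (qbar + d) := hmin _ (add_mem hqbar hd)
        _ = negPairing (p + qbar + d) z := by rw [hχz, add_assoc]
  have hχx : χ qbar = -⟪x.1, p + qbar⟫ - x.2 := by
    rw [hχy, ← negPairing_apply]
    exact le_antisymm (hxmax hyK) (hy hxK)
  have hχx' : χ qbar = -⟪x.1, p⟫ - x.2 := by
    rw [hχx, inner_add_right, Submodule.inner_right_of_mem_orthogonal hxV hqbar, add_zero]
  refine ⟨⟨x, hxK, hxV, hχx⟩, le_csSup ?_ ⟨x, hxK, hxV, hχx'⟩⟩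
  refine ((hcomp.image (negPairing p).continuous).bddAbove).mono ?_
  rintro r ⟨z, hzK, -, rfl⟩
  exact ⟨z, hzK, negPairing_apply p z⟩
end

section
/- Let H_δ(x,t,p) := sup_{|b| ≤ M, |l| ≤ M} ( −b·p − l − δ^{-1} ψ(b,l,x,t) ) where ψ ≥ 0 is Lipschitz with ψ(b,l,x,t) = 0 iff (b,l) ∈ F(x,t), and H(x,t,p) := sup_{(b,l) ∈ F(x,t)} (−b·p − l), with F having nonempty compact images contained in the ball of radius M. Then H_δ ≥ H for every δ > 0, each H_δ is Lipschitz continuous in (x,t,p) (locally in p), and H_δ(x,t,p) ↓ H(x,t,p) pointwise as δ ↓ 0. -/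
/-!
With `f_p(b, l) = -⟪b, p⟫ - l`, `H_δ` is the supremum of `f_p - δ⁻¹ ψ(·, x, t)` over the compact
box `S = {‖b‖ ≤ M, |l| ≤ M}`, and `H` is the supremum of `f_p` over `F(x, t) ⊆ S`, the zero set of
`ψ(·, x, t) ≥ 0`; this gives `H ≤ H_δ` and monotonicity in `δ`. Each penalized integrand is
`(M + δ⁻¹ Lψ)`-Lipschitz in `(x, t, p)`, hence so is their supremum. For the limit, fix `a > H`:
the compact set `{z ∈ S | a ≤ f_p z}` misses `F(x, t)`, so `ψ(·, x, t) ≥ m > 0` there, and once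
`δ⁻¹ m ≥ max_S f_p - a` the penalty keeps `H_δ ≤ a`.
-/

open scoped RealInnerProductSpace NNReal
open Filter Topology

section PenalizedSup

variable {X : Type*} [TopologicalSpace X] {K Z : Set X} {f g : X → ℝ}

noncomputable def penalizedSup (K : Set X) (f g : X → ℝ) (c : ℝ) : ℝ :=
  sSup ((fun z => f z - c * g z) '' K)

lemma bddAbove_image_sub_mul (hK : IsCompact K) (hf : Continuous f) (hg : Continuous g)
    (c : ℝ) : BddAbove ((fun z => f z - c * g z) '' K) :=
  (hK.image (by fun_prop)).bddAbove

lemma le_penalizedSup (hK : IsCompact K) (hf : Continuous f) (hg : Continuous g) {c : ℝ}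
    {z : X} (hz : z ∈ K) : f z - c * g z ≤ penalizedSup K f g c :=
  le_csSup (bddAbove_image_sub_mul hK hf hg c) ⟨z, hz, rfl⟩

lemma sSup_image_le_penalizedSup (hK : IsCompact K) (hf : Continuous f) (hg : Continuous g)
    (hZ : Z.Nonempty) (hZK : Z ⊆ K) (hgZ : ∀ z ∈ Z, g z = 0) (c : ℝ) :
    sSup (f '' Z) ≤ penalizedSup K f g c := by
  refine csSup_le (hZ.image f) ?_
  rintro _ ⟨z, hz, rfl⟩
  simpa [hgZ z hz] using le_penalizedSup hK hf hg (c := c) (hZK hz)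

lemma penalizedSup_antitone (hK : IsCompact K) (hK' : K.Nonempty) (hf : Continuous f)
    (hg : Continuous g) (hg₀ : ∀ z ∈ K, 0 ≤ g z) : Antitone (penalizedSup K f g) := by
  intro c₁ c₂ hc
  refine csSup_le (hK'.image _) ?_
  rintro _ ⟨z, hz, rfl⟩
  calc f z - c₂ * g z ≤ f z - c₁ * g z := by gcongr; exact hg₀ z hz
    _ ≤ penalizedSup K f g c₁ := le_penalizedSup hK hf hg hz

lemma eventually_penalizedSup_le (hK : IsCompact K) (hK' : K.Nonempty) (hf : Continuous f)
    (hg : Continuous g) (hg₀ : ∀ z ∈ K, 0 ≤ g z) (hZ : ∀ z ∈ K, g z = 0 → z ∈ Z)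
    (hZ_bdd : BddAbove (f '' Z)) {a : ℝ} (ha : sSup (f '' Z) < a) :
    ∀ᶠ c in atTop, penalizedSup K f g c ≤ a := by
  set K' := K ∩ {z | a ≤ f z}
  have hg_pos : ∀ z ∈ K', 0 < g z := by
    rintro z ⟨hzK, hza⟩
    refine (hg₀ z hzK).lt_of_ne' fun hgz => ?_
    exact ((le_csSup hZ_bdd ⟨z, hZ z hzK hgz, rfl⟩).trans_lt ha).not_ge hza
  obtain ⟨m, hm, hm_le⟩ :=
    (hK.inter_right (isClosed_le continuous_const hf)).exists_forall_le' hg.continuousOn hg_pos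
  obtain ⟨B, hB⟩ := (hK.image hf).bddAbove
  filter_upwards [eventually_ge_atTop 0, eventually_ge_atTop ((B - a) / m)] with c hc₀ hc
  refine csSup_le (hK'.image _) ?_
  rintro _ ⟨z, hz, rfl⟩
  by_cases hza : a ≤ f z
  · have hBa : B - a ≤ c * m := (div_le_iff₀ hm).1 hc
    have hmg : c * m ≤ c * g z := by gcongr; exact hm_le z ⟨hz, hza⟩
    linarith [hB ⟨z, hz, rfl⟩]
  · nlinarith [hg₀ z hz]

lemma tendsto_penalizedSup_atTop (hK : IsCompact K) (hf : Continuous f) (hg : Continuous g)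
    (hg₀ : ∀ z ∈ K, 0 ≤ g z) (hZ : Z.Nonempty) (hZK : Z ⊆ K)
    (hZ_zero : ∀ z ∈ K, g z = 0 ↔ z ∈ Z) :
    Tendsto (penalizedSup K f g) atTop (𝓝 (sSup (f '' Z))) := by
  have hZ_bdd : BddAbove (f '' Z) :=
    (hK.image hf).bddAbove.mono (Set.image_mono hZK)
  refine tendsto_order.2 ⟨fun a ha => Eventually.of_forall fun c =>
    ha.trans_le (sSup_image_le_penalizedSup hK hf hg hZ hZK
      (fun z hz => (hZ_zero z (hZK hz)).2 hz) c), fun a ha => ?_⟩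
  obtain ⟨b, hb, hba⟩ := exists_between ha
  filter_upwards [eventually_penalizedSup_le hK (hZ.mono hZK) hf hg hg₀
    (fun z hz => (hZ_zero z hz).1) hZ_bdd hb] with c hc using hc.trans_lt hba

end PenalizedSup

lemma lipschitzWith_sSup_image {α β : Type*} [PseudoMetricSpace α] {K : Set β}
    (hK : K.Nonempty) {φ : β → α → ℝ} {L : ℝ≥0} (hφ : ∀ z ∈ K, LipschitzWith L (φ z))
    (hφ_bdd : ∀ q, BddAbove ((φ · q) '' K)) :
    LipschitzWith L fun q => sSup ((φ · q) '' K) := by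
  refine LipschitzWith.of_le_add_mul L fun q q' => csSup_le (hK.image _) ?_
  rintro _ ⟨z, hz, rfl⟩
  calc φ z q ≤ φ z q' + L * dist q q' := (hφ z hz).le_add_mul q q'
    _ ≤ sSup ((φ · q') '' K) + L * dist q q' := by
      gcongr; exact le_csSup (hφ_bdd q') ⟨z, hz, rfl⟩

lemma lipschitzWith_neg_inner_sub_sub_mul {Y E : Type*} [PseudoMetricSpace Y]
    [NormedAddCommGroup E] [InnerProductSpace ℝ E] {b : E} {M : ℝ} (hb : ‖b‖ ≤ M) (l c : ℝ)
    {g : Y → ℝ} {K : ℝ≥0} (hg : LipschitzWith K g) :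
    LipschitzWith (M.toNNReal + ‖c‖₊ * K) fun q : Y × E => -⟪b, q.2⟫ - l - c * g q.1 := by
  have h_norm : ‖innerSL ℝ b‖₊ ≤ M.toNNReal := by
    rw [← norm_toNNReal, innerSL_apply_norm]
    exact Real.toNNReal_le_toNNReal hb
  have h_inner : LipschitzWith M.toNNReal fun q : Y × E => -⟪b, q.2⟫ - l := by
    simpa using
      (((innerSL ℝ b).lipschitz.comp (LipschitzWith.prod_snd (α := Y))).neg.sub
        (LipschitzWith.const l)).weaken (by simpa using h_norm)
  have h_fst : LipschitzWith K fun q : Y × E => g q.1 :=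
    (hg.comp LipschitzWith.prod_fst).weaken (mul_one K).le
  exact h_inner.sub ((lipschitzWith_smul c).comp h_fst)

lemma lipschitzWith_sSup_neg_inner_sub_sub_mul {Y E : Type*} [PseudoMetricSpace Y]
    [NormedAddCommGroup E] [InnerProductSpace ℝ E] {S : Set (E × ℝ)} (hS : IsCompact S)
    (hS_ne : S.Nonempty) {M : ℝ} (hSM : ∀ bl ∈ S, ‖bl.1‖ ≤ M) {ψ : E × ℝ → Y → ℝ} {L : ℝ≥0}
    (hψ : LipschitzWith L fun q : (E × ℝ) × Y => ψ q.1 q.2) (c : ℝ) :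
    LipschitzWith (M.toNNReal + ‖c‖₊ * L)
      fun q : Y × E => sSup ((fun bl => -⟪bl.1, q.2⟫ - bl.2 - c * ψ bl q.1) '' S) := by
  have hψ_left (bl : E × ℝ) : LipschitzWith L (ψ bl) :=
    (hψ.comp (LipschitzWith.prodMk_left bl)).weaken (mul_one L).le
  refine lipschitzWith_sSup_image hS_ne
    (fun bl hbl => lipschitzWith_neg_inner_sub_sub_mul (hSM bl hbl) bl.2 c (hψ_left bl))
    fun q => bddAbove_image_sub_mul hS (by fun_prop) ?_ c
  exact hψ.continuous.comp (continuous_id.prodMk continuous_const)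

theorem stmt17_general (N : ℕ) (M : ℝ) (Lψ : NNReal)
    (F : EuclideanSpace ℝ (Fin N) × ℝ → Set (EuclideanSpace ℝ (Fin N) × ℝ))
    (hne : ∀ xt, (F xt).Nonempty)
    (hbd : ∀ xt, ∀ bl ∈ F xt, ‖bl.1‖ ≤ M ∧ |bl.2| ≤ M)
    (ψ : (EuclideanSpace ℝ (Fin N) × ℝ) → (EuclideanSpace ℝ (Fin N) × ℝ) → ℝ)
    (hψpos : ∀ bl xt, 0 ≤ ψ bl xt)
    (hψlip : LipschitzWith Lψ
      (fun q : (EuclideanSpace ℝ (Fin N) × ℝ) × (EuclideanSpace ℝ (Fin N) × ℝ) =>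
        ψ q.1 q.2))
    (hψzero : ∀ bl xt, ψ bl xt = 0 ↔ bl ∈ F xt)
    (Hδ : ℝ → EuclideanSpace ℝ (Fin N) → ℝ → EuclideanSpace ℝ (Fin N) → ℝ)
    (hHδ : ∀ δ x t p, Hδ δ x t p = sSup ((fun bl : EuclideanSpace ℝ (Fin N) × ℝ =>
      -⟪bl.1, p⟫ - bl.2 - δ⁻¹ * ψ bl (x, t)) ''
        {bl : EuclideanSpace ℝ (Fin N) × ℝ | ‖bl.1‖ ≤ M ∧ |bl.2| ≤ M}))
    (H : EuclideanSpace ℝ (Fin N) → ℝ → EuclideanSpace ℝ (Fin N) → ℝ)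
    (hH : ∀ x t p, H x t p = sSup ((fun bl : EuclideanSpace ℝ (Fin N) × ℝ =>
      -⟪bl.1, p⟫ - bl.2) '' F (x, t))) :
    (∀ δ > (0:ℝ), ∀ x t p, H x t p ≤ Hδ δ x t p) ∧
    (∀ δ > (0:ℝ), ∀ R > (0:ℝ), ∃ C : NNReal, LipschitzOnWith C
      (fun q : (EuclideanSpace ℝ (Fin N) × ℝ) × EuclideanSpace ℝ (Fin N) =>
        Hδ δ q.1.1 q.1.2 q.2)
      (Set.univ ×ˢ Metric.closedBall 0 R)) ∧
    (∀ x t p,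
      (∀ δ₁ δ₂ : ℝ, 0 < δ₁ → δ₁ ≤ δ₂ → Hδ δ₁ x t p ≤ Hδ δ₂ x t p) ∧
      Filter.Tendsto (fun δ => Hδ δ x t p) (nhdsWithin 0 (Set.Ioi 0))
        (nhds (H x t p))) := by
  set S := {bl : EuclideanSpace ℝ (Fin N) × ℝ | ‖bl.1‖ ≤ M ∧ |bl.2| ≤ M}
  have hS : IsCompact S := by
    have : S = Metric.closedBall 0 M ×ˢ Metric.closedBall 0 M := by
      ext; simp [S, Real.norm_eq_abs]
    exact this ▸ (isCompact_closedBall _ _).prod (isCompact_closedBall _ _)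
  have hFS : ∀ xt, F xt ⊆ S := hbd
  have hS_ne : S.Nonempty := (hne 0).mono (hFS 0)
  have hf (p : EuclideanSpace ℝ (Fin N)) :
      Continuous fun bl : EuclideanSpace ℝ (Fin N) × ℝ => -⟪bl.1, p⟫ - bl.2 := by fun_prop
  have hg (xt : EuclideanSpace ℝ (Fin N) × ℝ) : Continuous fun bl => ψ bl xt :=
    hψlip.continuous.comp (continuous_id.prodMk continuous_const)
  have hHδ_penalized : ∀ δ x t p, Hδ δ x t p =
      penalizedSup S (fun bl => -⟪bl.1, p⟫ - bl.2) (fun bl => ψ bl (x, t)) δ⁻¹ := hHδ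
  refine ⟨fun δ _ x t p => ?_, fun δ _ R _ => ?_, fun x t p => ⟨fun δ₁ δ₂ hδ₁ hδ => ?_, ?_⟩⟩
  · rw [hH, hHδ_penalized]
    exact sSup_image_le_penalizedSup hS (hf p) (hg _) (hne _) (hFS _)
      (fun bl hbl => (hψzero bl _).2 hbl) _
  · refine ⟨M.toNNReal + ‖δ⁻¹‖₊ * Lψ, LipschitzWith.lipschitzOnWith ?_⟩
    convert lipschitzWith_sSup_neg_inner_sub_sub_mul hS hS_ne (fun bl hbl => hbl.1) hψlip δ⁻¹
      using 2 with q
    exact hHδ _ _ _ _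
  · rw [hHδ_penalized, hHδ_penalized]
    exact penalizedSup_antitone hS hS_ne (hf p) (hg _)
      (fun bl _ => hψpos bl _) (inv_anti₀ hδ₁ hδ)
  · rw [hH]
    simp_rw [hHδ_penalized]
    exact (tendsto_penalizedSup_atTop hS (hf p) (hg _) (fun bl _ => hψpos bl _) (hne _)
      (hFS _) (fun bl _ => hψzero bl _)).comp tendsto_inv_nhdsGT_zero

/-- The penalized Hamiltonians
`H_δ(x,t,p) = sup_{|b|≤M,|l|≤M} (-b·p - l - δ⁻¹ ψ(b,l,x,t))` dominate
`H(x,t,p) = sup_{(b,l) ∈ F(x,t)} (-b·p - l)`, are Lipschitz in `(x,t,p)` (locally in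
`p`), and decrease pointwise to `H` as `δ ↓ 0`. -/
theorem stmt17 (N : ℕ) (M : ℝ) (hM : 0 < M) (Lψ : NNReal)
    (F : EuclideanSpace ℝ (Fin N) × ℝ → Set (EuclideanSpace ℝ (Fin N) × ℝ))
    (hne : ∀ xt, (F xt).Nonempty)
    (hcomp : ∀ xt, IsCompact (F xt))
    (hbd : ∀ xt, ∀ bl ∈ F xt, ‖bl.1‖ ≤ M ∧ |bl.2| ≤ M)
    (ψ : (EuclideanSpace ℝ (Fin N) × ℝ) → (EuclideanSpace ℝ (Fin N) × ℝ) → ℝ)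
    (hψpos : ∀ bl xt, 0 ≤ ψ bl xt)
    (hψlip : LipschitzWith Lψ
      (fun q : (EuclideanSpace ℝ (Fin N) × ℝ) × (EuclideanSpace ℝ (Fin N) × ℝ) =>
        ψ q.1 q.2))
    (hψzero : ∀ bl xt, ψ bl xt = 0 ↔ bl ∈ F xt)
    (Hδ : ℝ → EuclideanSpace ℝ (Fin N) → ℝ → EuclideanSpace ℝ (Fin N) → ℝ)
    (hHδ : ∀ δ x t p, Hδ δ x t p = sSup ((fun bl : EuclideanSpace ℝ (Fin N) × ℝ =>
      -⟪bl.1, p⟫ - bl.2 - δ⁻¹ * ψ bl (x, t)) ''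
        {bl : EuclideanSpace ℝ (Fin N) × ℝ | ‖bl.1‖ ≤ M ∧ |bl.2| ≤ M}))
    (H : EuclideanSpace ℝ (Fin N) → ℝ → EuclideanSpace ℝ (Fin N) → ℝ)
    (hH : ∀ x t p, H x t p = sSup ((fun bl : EuclideanSpace ℝ (Fin N) × ℝ =>
      -⟪bl.1, p⟫ - bl.2) '' F (x, t))) :
    (∀ δ > (0:ℝ), ∀ x t p, H x t p ≤ Hδ δ x t p) ∧
    (∀ δ > (0:ℝ), ∀ R > (0:ℝ), ∃ C : NNReal, LipschitzOnWith C
      (fun q : (EuclideanSpace ℝ (Fin N) × ℝ) × EuclideanSpace ℝ (Fin N) =>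
        Hδ δ q.1.1 q.1.2 q.2)
      (Set.univ ×ˢ Metric.closedBall 0 R)) ∧
    (∀ x t p,
      (∀ δ₁ δ₂ : ℝ, 0 < δ₁ → δ₁ ≤ δ₂ → Hδ δ₁ x t p ≤ Hδ δ₂ x t p) ∧
      Filter.Tendsto (fun δ => Hδ δ x t p) (nhdsWithin 0 (Set.Ioi 0))
        (nhds (H x t p))) :=
  stmt17_general N M Lψ F hne hbd ψ hψpos hψlip hψzero Hδ hHδ H hH
end
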